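/- If p ∈ [2, ∞] and f, g ∈ H^p(𝔹), then f * g ∈ H^1(𝔹) and g * f ∈ H^1(𝔹). -/

import Mathlib

open MeasureTheory Metric Filter Set
open scoped Topology ENNReal Quaternion

noncomputable section

/-- The 2-sphere of imaginary units in the quaternions. -/
def QSphere : Set ℍ[ℝ] := {q | q ^ 2 = -1}

/-- The open unit ball of the quaternions. -/
def QBall : Set ℍ[ℝ] := Metric.ball 0 1

/-- The point `x + yI` of the slice `L_I = ℝ + ℝI`. -/
def slicePt (I : ℍ[ℝ]) (x y : ℝ) : ℍ[ℝ] := (x : ℍ[ℝ]) + y • I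

/-- A function `f : 𝔹 → ℍ` (given on all of `ℍ`, its values outside the unit ball being
irrelevant) is slice regular on the unit ball if, for every imaginary unit `I`, the
restriction of `f` to the slice `𝔹_I` is (real-)differentiable and satisfies the
Cauchy–Riemann equation `∂f/∂x + I ∂f/∂y = 0`. -/
def SliceRegular (f : ℍ[ℝ] → ℍ[ℝ]) : Prop :=
  ∀ I ∈ QSphere, ∀ p : ℝ × ℝ, p.1 ^ 2 + p.2 ^ 2 < 1 →
    DifferentiableAt ℝ (fun w : ℝ × ℝ => f (slicePt I w.1 w.2)) p ∧
    fderiv ℝ (fun w : ℝ × ℝ => f (slicePt I w.1 w.2)) p (1, 0)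
      + I * fderiv ℝ (fun w : ℝ × ℝ => f (slicePt I w.1 w.2)) p (0, 1) = 0

/-- The point `r e^{Iθ}` of the slice `L_I`. -/
def circlePt (I : ℍ[ℝ]) (r θ : ℝ) : ℍ[ℝ] := slicePt I (r * Real.cos θ) (r * Real.sin θ)

/-- The integral mean `M_p(f_I, r) = ((1/2π) ∫ |f(re^{Iθ})|^p dθ)^{1/p}`. -/
def sliceMp (f : ℍ[ℝ] → ℍ[ℝ]) (I : ℍ[ℝ]) (p r : ℝ) : ℝ≥0∞ :=
  ENNReal.ofReal
    (((1 / (2 * Real.pi)) * ∫ θ in (0:ℝ)..(2 * Real.pi), ‖f (circlePt I r θ)‖ ^ p) ^ (1 / p))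

/-- The slice `p`-norm `‖f_I‖_p = lim_{r→1⁻} M_p(f_I, r)`; since `r ↦ M_p(f_I,r)` is
increasing for slice regular `f`, the limit equals the supremum over `r ∈ [0,1)`. -/
def sliceNorm (f : ℍ[ℝ] → ℍ[ℝ]) (I : ℍ[ℝ]) (p : ℝ) : ℝ≥0∞ :=
  ⨆ r ∈ Set.Ico (0:ℝ) 1, sliceMp f I p r

/-- The slice `p`-norm for an extended exponent `p ∈ (0,∞]`; for `p = ∞` it is the sup norm
on the slice. -/
def sliceNormE (f : ℍ[ℝ] → ℍ[ℝ]) (I : ℍ[ℝ]) (p : ℝ≥0∞) : ℝ≥0∞ :=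
  if p = ⊤ then
    ⨆ (w : ℝ × ℝ) (_ : w.1 ^ 2 + w.2 ^ 2 < 1), ENNReal.ofReal ‖f (slicePt I w.1 w.2)‖
  else sliceNorm f I p.toReal

/-- The quaternionic Hardy norm `‖f‖_p = sup_{I∈𝕊} ‖f_I‖_p` (for `p = ∞` this is the sup
norm on the ball). -/
def hardyNorm (f : ℍ[ℝ] → ℍ[ℝ]) (p : ℝ≥0∞) : ℝ≥0∞ :=
  ⨆ I ∈ QSphere, sliceNormE f I p

/-- Membership in the quaternionic Hardy space `H^p(𝔹)`. -/
def MemHp (f : ℍ[ℝ] → ℍ[ℝ]) (p : ℝ≥0∞) : Prop :=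
  SliceRegular f ∧ hardyNorm f p < ⊤

open Classical in
/-- The pointwise formula for the regular `*`-product of two slice regular functions:
`(f*g)(q) = f(q)·g(f(q)⁻¹ q f(q))` if `f(q) ≠ 0`, and `0` otherwise. -/
def starProd (h g : ℍ[ℝ] → ℍ[ℝ]) : ℍ[ℝ] → ℍ[ℝ] :=
  fun q => if h q = 0 then 0 else h q * g ((h q)⁻¹ * q * h q)

lemma qcoe_eq_smul_one (r : ℝ) : (r : ℍ[ℝ]) = r • (1 : ℍ[ℝ]) := by
  rw [← Quaternion.algebraMap_def, Algebra.algebraMap_eq_smul_one]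

lemma norm_one_of_sq {I : ℍ[ℝ]} (hI : I ^ 2 = -1) : ‖I‖ = 1 := by
  have h : ‖I‖ ^ 2 = 1 := by rw [← norm_pow, hI, norm_neg, norm_one]
  nlinarith [norm_nonneg I]

lemma star_eq_neg_of_sq {I : ℍ[ℝ]} (hI : I ^ 2 = -1) : star I = -I := by
  have hne : I ≠ 0 := by
    rintro rfl
    have := congrArg QuaternionAlgebra.re hI
    simp at this
  have h1 : I * star I = I * (-I) := by
    rw [Quaternion.self_mul_star, Quaternion.normSq_eq_norm_mul_self, norm_one_of_sq hI,
      mul_neg, ← pow_two I, hI, neg_neg]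
    norm_num
  exact mul_left_cancel₀ hne h1


lemma normSq_slicePt {I : ℍ[ℝ]} (hI : I ^ 2 = -1) (x y : ℝ) :
    ‖slicePt I x y‖ ^ 2 = x ^ 2 + y ^ 2 := by
  have hst : star (slicePt I x y) = (x : ℍ[ℝ]) - y • I := by
    simp [slicePt, star_eq_neg_of_sq hI, sub_eq_add_neg]
  have hII : I * I = -1 := by rw [← pow_two, hI]
  have h2 : slicePt I x y * star (slicePt I x y) = ((x ^ 2 + y ^ 2 : ℝ) : ℍ[ℝ]) := by
    rw [hst]
    simp only [slicePt, qcoe_eq_smul_one]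
    rw [show (x • (1:ℍ[ℝ]) + y • I) * (x • (1:ℍ[ℝ]) - y • I)
        = (x*x) • (1:ℍ[ℝ]) - (y*y) • (I * I) by
      simp only [mul_sub, add_mul, smul_mul_smul_comm, one_mul, mul_one]
      module]
    rw [hII]
    module
  rw [Quaternion.self_mul_star] at h2
  have hn : Quaternion.normSq (slicePt I x y) = x ^ 2 + y ^ 2 :=
    Quaternion.coe_injective h2
  rw [sq, ← Quaternion.normSq_eq_norm_mul_self, hn]

/-- product of slice points on the same slice -/
lemma slicePt_mul {I : ℍ[ℝ]} (hI : I ^ 2 = -1) (a b c d : ℝ) :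
    slicePt I a b * slicePt I c d = slicePt I (a*c - b*d) (a*d + b*c) := by
  have hII : I * I = -1 := by rw [← pow_two, hI]
  simp only [slicePt, qcoe_eq_smul_one]
  rw [show (a • (1:ℍ[ℝ]) + b • I) * (c • (1:ℍ[ℝ]) + d • I)
      = (a*c) • (1:ℍ[ℝ]) + (b*d) • (I*I) + ((a*d) • I + (b*c) • I) by
    simp only [mul_add, add_mul, smul_mul_smul_comm, one_mul, mul_one]
    module]
  rw [hII]
  module

lemma slicePt_one (I : ℍ[ℝ]) : slicePt I 1 0 = 1 := by simp [slicePt]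
lemma slicePt_zero_y (I : ℍ[ℝ]) (x : ℝ) : slicePt I x 0 = (x : ℍ[ℝ]) := by simp [slicePt]
lemma slicePt_add (I : ℍ[ℝ]) (a b c d : ℝ) :
    slicePt I (a+c) (b+d) = slicePt I a b + slicePt I c d := by
  simp only [slicePt, qcoe_eq_smul_one]; module
lemma slicePt_smul (I : ℍ[ℝ]) (r a b : ℝ) :
    slicePt I (r*a) (r*b) = r • slicePt I a b := by
  simp only [slicePt, qcoe_eq_smul_one]; module
lemma norm_slicePt_c {I : ℍ[ℝ]} (hI : I ^ 2 = -1) (c : ℂ) :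
    ‖slicePt I c.re c.im‖ = ‖c‖ := by
  have h1 := normSq_slicePt hI c.re c.im
  have h2 : ‖c‖ ^ 2 = c.re ^ 2 + c.im ^ 2 := by
    rw [Complex.sq_norm, Complex.normSq_apply]; ring
  nlinarith [norm_nonneg (slicePt I c.re c.im), norm_nonneg c]

/-- imaginary units -/
def Sph : Type := {q : ℍ[ℝ] // q ^ 2 = -1}

/-- Type synonym for `ℍ[ℝ]` with the complex module structure of the slice `L_I`. -/
def SliceC (_I : Sph) : Type := ℍ[ℝ]

/-- identity map `SliceC I → ℍ[ℝ]` -/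
def SliceC.q {I : Sph} (v : SliceC I) : ℍ[ℝ] := v
/-- identity map `ℍ[ℝ] → SliceC I` -/
def SliceC.mk (I : Sph) (v : ℍ[ℝ]) : SliceC I := v

namespace SliceC
variable {I : Sph}

instance : NormedAddCommGroup (SliceC I) := inferInstanceAs (NormedAddCommGroup ℍ[ℝ])
instance : NormedSpace ℝ (SliceC I) := inferInstanceAs (NormedSpace ℝ ℍ[ℝ])
instance : CompleteSpace (SliceC I) := inferInstanceAs (CompleteSpace ℍ[ℝ])

instance : SMul ℂ (SliceC I) := ⟨fun c v => mk I (slicePt I.1 c.re c.im * q v)⟩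

lemma q_csmul (c : ℂ) (v : SliceC I) : q (c • v) = slicePt I.1 c.re c.im * q v := rfl

instance : Module ℂ (SliceC I) where
  one_smul v := show slicePt I.1 (1:ℂ).re (1:ℂ).im * q v = q v by
    simp only [Complex.one_re, Complex.one_im, slicePt_one, one_mul]
  mul_smul c d v := show slicePt I.1 (c*d).re (c*d).im * q v
      = slicePt I.1 c.re c.im * (slicePt I.1 d.re d.im * q v) by
    rw [show ((c*d).re : ℝ) = c.re*d.re - c.im*d.im from Complex.mul_re c d,
        show ((c*d).im : ℝ) = c.re*d.im + c.im*d.re from Complex.mul_im c d,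
        ← slicePt_mul I.2, mul_assoc]
  smul_zero c := show slicePt I.1 c.re c.im * q 0 = q 0 from mul_zero _
  smul_add c u v := show slicePt I.1 c.re c.im * (q u + q v)
      = slicePt I.1 c.re c.im * q u + slicePt I.1 c.re c.im * q v from mul_add _ _ _
  add_smul c d v := show slicePt I.1 (c+d).re (c+d).im * q v
      = slicePt I.1 c.re c.im * q v + slicePt I.1 d.re d.im * q v by
    rw [Complex.add_re, Complex.add_im, slicePt_add]
    exact add_mul _ _ _
  zero_smul v := show slicePt I.1 (0:ℂ).re (0:ℂ).im * q v = q 0 by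
    simp only [Complex.zero_re, Complex.zero_im, slicePt_zero_y]
    simp [q]
    exact zero_mul (M₀ := ℍ[ℝ]) _

instance : NormedSpace ℂ (SliceC I) where
  norm_smul_le c v := by
    have : ‖c • v‖ = ‖slicePt I.1 c.re c.im * q v‖ := rfl
    rw [this, norm_mul, norm_slicePt_c I.2]; exact le_of_eq rfl

instance : IsScalarTower ℝ ℂ (SliceC I) where
  smul_assoc r c v := show slicePt I.1 ((r:ℂ)*c).re ((r:ℂ)*c).im * q v
      = r • (slicePt I.1 c.re c.im * q v) by
    rw [show (((r:ℂ)*c).re : ℝ) = r * c.re by simp, show (((r:ℂ)*c).im : ℝ) = r * c.im by simp,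
      slicePt_smul]
    exact smul_mul_assoc r _ _

end SliceC

def SliceC.mkLin (I : Sph) : ℍ[ℝ] →ₗ[ℝ] SliceC I :=
  { toFun := SliceC.mk I, map_add' := fun _ _ => rfl, map_smul' := fun _ _ => rfl }

def SliceC.mkL (I : Sph) : ℍ[ℝ] →L[ℝ] SliceC I :=
  (SliceC.mkLin I).mkContinuous 1 (fun v => by
    rw [one_mul]; exact le_of_eq rfl)

lemma SliceC.mkL_apply (I : Sph) (v : ℍ[ℝ]) : SliceC.mkL I v = SliceC.mk I v := rfl

lemma hasFDerivAt_sliceC {I : Sph} {H : ℝ × ℝ → ℍ[ℝ]} {w : ℝ × ℝ}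
    (hd : DifferentiableAt ℝ H w)
    (hcr : fderiv ℝ H w (1, 0) + I.1 * fderiv ℝ H w (0, 1) = 0) :
    DifferentiableAt ℂ (fun z : ℂ => SliceC.mk I (H (z.re, z.im))) (⟨w.1, w.2⟩ : ℂ) := by
  set D := fderiv ℝ H w with hDdef
  have hDf : HasFDerivAt H D w := hd.hasFDerivAt
  set v : SliceC I := SliceC.mk I (D (1, 0)) with hv
  set T : ℂ →L[ℂ] SliceC I := (ContinuousLinearMap.id ℂ ℂ).smulRight v with hT
  have hII : I.1 * I.1 = -1 := by rw [← pow_two, I.2]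
  have hKD : I.1 * D (1,0) = D (0,1) := by
    have h2 : I.1 * D (1,0) + I.1 * (I.1 * D (0,1)) = 0 := by
      rw [← mul_add, hcr, mul_zero]
    rw [← mul_assoc, hII, neg_one_mul] at h2
    exact add_neg_eq_zero.mp h2
  have key : ∀ z : ℂ, SliceC.q (z • v) = D (z.re, z.im) := by
    intro z
    rw [SliceC.q_csmul]
    have hq : SliceC.q v = D (1,0) := rfl
    rw [hq]
    have h3 : slicePt I.1 z.re z.im * D (1,0)
        = z.re • D (1,0) + z.im • (I.1 * D (1,0)) := by
      simp only [slicePt, qcoe_eq_smul_one, add_mul, smul_mul_assoc, one_mul]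
    rw [h3, hKD]
    have hz : ((z.re, z.im) : ℝ × ℝ) = z.re • ((1:ℝ),(0:ℝ)) + z.im • ((0:ℝ),(1:ℝ)) := by
      simp [Prod.ext_iff]
    rw [hz]
    simp only [map_add, ContinuousLinearMap.map_smul]
  have hρ : HasFDerivAt (fun z : ℂ => (z.re, z.im))
      (Complex.equivRealProdCLM.toContinuousLinearMap) (⟨w.1, w.2⟩ : ℂ) :=
    Complex.equivRealProdCLM.toContinuousLinearMap.hasFDerivAt
  have step1 : HasFDerivAt (fun p : ℝ × ℝ => SliceC.mk I (H p))
      ((SliceC.mkL I).comp D) w := (SliceC.mkL I).hasFDerivAt.comp w hDf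
  have hcomp : HasFDerivAt (fun z : ℂ => SliceC.mk I (H (z.re, z.im)))
      (((SliceC.mkL I).comp D).comp (Complex.equivRealProdCLM.toContinuousLinearMap))
      (⟨w.1, w.2⟩ : ℂ) := by
    exact HasFDerivAt.comp (⟨w.1, w.2⟩ : ℂ) step1 hρ
  have hres : T.restrictScalars ℝ
      = ((SliceC.mkL I).comp D).comp (Complex.equivRealProdCLM.toContinuousLinearMap) := by
    apply ContinuousLinearMap.ext
    intro z
    have h1 : (T.restrictScalars ℝ) z = z • v := rfl
    rw [h1]
    have h2 : (((SliceC.mkL I).comp D).comp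
        (Complex.equivRealProdCLM.toContinuousLinearMap)) z
        = SliceC.mk I (D (z.re, z.im)) := rfl
    rw [h2]
    exact key z
  exact (hasFDerivAt_of_restrictScalars ℝ (f' := T) hcomp hres).differentiableAt

lemma normsq_c (z : ℂ) : ‖z‖ ^ 2 = z.re ^ 2 + z.im ^ 2 := by
  rw [Complex.sq_norm, Complex.normSq_apply]; ring

lemma mem_ball_c_iff {z : ℂ} : z ∈ Metric.ball (0:ℂ) 1 ↔ z.re ^ 2 + z.im ^ 2 < 1 := by
  rw [Metric.mem_ball, dist_zero_right]
  constructor <;> intro h <;> nlinarith [norm_nonneg z, normsq_c z]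

/-- the slice function, as a map `ℂ → SliceC I`, is holomorphic on the disc -/
lemma diffOn_sliceFn {g : ℍ[ℝ] → ℍ[ℝ]} (hg : SliceRegular g) (I : Sph) :
    DifferentiableOn ℂ (fun z : ℂ => SliceC.mk I (g (slicePt I.1 z.re z.im)))
      (Metric.ball (0:ℂ) 1) := by
  intro z hz
  have h := hg I.1 I.2 (z.re, z.im) (mem_ball_c_iff.mp hz)
  have h2 := hasFDerivAt_sliceC (I := I) h.1 h.2
  have hzeta : (⟨z.re, z.im⟩ : ℂ) = z := by
    apply Complex.ext <;> rfl
  rw [hzeta] at h2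
  exact h2.differentiableWithinAt

section Rep
variable {g : ℍ[ℝ] → ℍ[ℝ]} (I K : Sph)

/-- the function giving the representation formula -/
def psiFn (g : ℍ[ℝ] → ℍ[ℝ]) (I K : Sph) : ℂ → SliceC K := fun z =>
  SliceC.mk K ((2⁻¹:ℝ) • (1 - K.1 * I.1) * g (slicePt I.1 z.re z.im)
    + (2⁻¹:ℝ) • (1 + K.1 * I.1) * g (slicePt I.1 z.re (-z.im)))

lemma psi_diffOn (hg : SliceRegular g) :
    DifferentiableOn ℂ (psiFn g I K) (Metric.ball (0:ℂ) 1) := by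
  set a : ℍ[ℝ] := (2⁻¹:ℝ) • (1 - K.1 * I.1) with hadef
  set b : ℍ[ℝ] := (2⁻¹:ℝ) • (1 + K.1 * I.1) with hbdef
  have hII : I.1 * I.1 = -1 := by rw [← pow_two, I.2]
  have hKK : K.1 * K.1 = -1 := by rw [← pow_two, K.2]
  have ha : a * I.1 = K.1 * a := by
    rw [hadef, smul_mul_assoc, mul_smul_comm, sub_mul, mul_sub, one_mul, mul_one,
      mul_assoc, hII, ← mul_assoc, hKK, mul_neg_one, neg_one_mul, sub_neg_eq_add,
      sub_neg_eq_add, add_comm]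
  have hb : b * I.1 = -(K.1 * b) := by
    rw [hbdef, smul_mul_assoc, mul_smul_comm, add_mul, mul_add, one_mul, mul_one,
      mul_assoc, hII, ← mul_assoc, hKK, mul_neg_one, neg_one_mul, ← smul_neg]
    congr 1
    abel
  intro z hz
  set G : ℝ × ℝ → ℍ[ℝ] := fun w => g (slicePt I.1 w.1 w.2) with hG
  set σ : ℝ × ℝ →L[ℝ] ℝ × ℝ :=
    (ContinuousLinearMap.fst ℝ ℝ ℝ).prod (-(ContinuousLinearMap.snd ℝ ℝ ℝ)) with hσ
  set w : ℝ × ℝ := (z.re, z.im) with hw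
  have hwmem : w.1 ^ 2 + w.2 ^ 2 < 1 := mem_ball_c_iff.mp hz
  have hwmem' : (w.1, -w.2).1 ^ 2 + (w.1, -w.2).2 ^ 2 < 1 := by
    simpa using hwmem
  have hGd := hg I.1 I.2 w hwmem
  have hGd' := hg I.1 I.2 (w.1, -w.2) hwmem'
  set D := fderiv ℝ G w with hD
  set D' := fderiv ℝ G (w.1, -w.2) with hD'
  have hσw : σ w = (w.1, -w.2) := rfl
  have hmula : HasFDerivAt (fun v : ℍ[ℝ] => a * v) (ContinuousLinearMap.mul ℝ ℍ[ℝ] a) a :=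
    (ContinuousLinearMap.mul ℝ ℍ[ℝ] a).hasFDerivAt
  -- derivative of H := fun w => a * G w + b * G (σ w)
  have h1 : HasFDerivAt (fun w : ℝ × ℝ => a * G w)
      ((ContinuousLinearMap.mul ℝ ℍ[ℝ] a).comp D) w :=
    ((ContinuousLinearMap.mul ℝ ℍ[ℝ] a).hasFDerivAt).comp w hGd.1.hasFDerivAt
  have h2 : HasFDerivAt (fun w : ℝ × ℝ => b * G (σ w))
      (((ContinuousLinearMap.mul ℝ ℍ[ℝ] b).comp D').comp σ) w := by
    have hσd : HasFDerivAt (fun v : ℝ × ℝ => σ v) σ w := σ.hasFDerivAt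
    have hGσ : HasFDerivAt G D' (σ w) := by rw [hσw]; exact hGd'.1.hasFDerivAt
    exact ((ContinuousLinearMap.mul ℝ ℍ[ℝ] b).hasFDerivAt.comp (σ w) hGσ).comp w hσd
  set E := ((ContinuousLinearMap.mul ℝ ℍ[ℝ] a).comp D)
      + (((ContinuousLinearMap.mul ℝ ℍ[ℝ] b).comp D').comp σ) with hE
  have hH : HasFDerivAt (fun w : ℝ × ℝ => a * G w + b * G (σ w)) E w := h1.add h2
  -- identify the function with the H of our slice-regularity lemma
  have hfun : (fun w : ℝ × ℝ => a * G w + b * G (σ w))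
      = fun w : ℝ × ℝ => a * g (slicePt I.1 w.1 w.2) + b * g (slicePt I.1 w.1 (-w.2)) := rfl
  -- Cauchy-Riemann for E with respect to K
  have hcr1 : D (1,0) + I.1 * D (0,1) = 0 := hGd.2
  have hcr2 : D' (1,0) + I.1 * D' (0,1) = 0 := hGd'.2
  have hE10 : E (1,0) = a * D (1,0) + b * D' (1,0) := by
    have hs : σ ((1:ℝ),(0:ℝ)) = ((1:ℝ),(0:ℝ)) := by
      simp [hσ, Prod.ext_iff]
    have hOne : E (1,0) = a * D (1,0) + b * D' (σ (1,0)) := by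
      simp [hE, ContinuousLinearMap.mul_apply']
    rw [hOne, hs]
  have hE01 : E (0,1) = a * D (0,1) + b * (-(D' (0,1))) := by
    have hs : σ ((0:ℝ),(1:ℝ)) = -((0:ℝ),(1:ℝ)) := by
      simp [hσ, Prod.ext_iff]
    have hOne : E (0,1) = a * D (0,1) + b * D' (σ (0,1)) := by
      simp [hE, ContinuousLinearMap.mul_apply']
    rw [hOne, hs, map_neg]
  have hcrE : E (1,0) + K.1 * E (0,1) = 0 := by
    rw [hE10, hE01]
    have e1 : D (1,0) = -(I.1 * D (0,1)) := by
      rw [eq_neg_iff_add_eq_zero]; exact hcr1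
    have e2 : D' (1,0) = -(I.1 * D' (0,1)) := by
      rw [eq_neg_iff_add_eq_zero]; exact hcr2
    rw [e1, e2]
    calc a * -(I.1 * D (0,1)) + b * -(I.1 * D' (0,1))
          + K.1 * (a * D (0,1) + b * -(D' (0,1)))
        = -((a * I.1) * D (0,1)) + -((b * I.1) * D' (0,1))
          + ((K.1 * a) * D (0,1) + -((K.1 * b) * D' (0,1))) := by
          simp only [mul_neg, mul_add, mul_assoc]
      _ = -((K.1 * a) * D (0,1)) + ((K.1 * b) * D' (0,1))
          + ((K.1 * a) * D (0,1) + -((K.1 * b) * D' (0,1))) := by rw [ha, hb]; simp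
      _ = 0 := by abel
  -- now apply the holomorphy criterion
  have hd : DifferentiableAt ℝ (fun w : ℝ × ℝ => a * G w + b * G (σ w)) w :=
    hH.differentiableAt
  have hfd : fderiv ℝ (fun w : ℝ × ℝ => a * G w + b * G (σ w)) w = E := hH.fderiv
  have hcrH : fderiv ℝ (fun w : ℝ × ℝ => a * G w + b * G (σ w)) w (1,0)
      + K.1 * fderiv ℝ (fun w : ℝ × ℝ => a * G w + b * G (σ w)) w (0,1) = 0 := by
    rw [hfd]; exact hcrE
  have h3 := hasFDerivAt_sliceC (I := K) hd hcrH
  have hzeta : (⟨w.1, w.2⟩ : ℂ) = z := by apply Complex.ext <;> rfl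
  rw [hzeta] at h3
  exact h3.differentiableWithinAt
end Rep

lemma rep_formula {g : ℍ[ℝ] → ℍ[ℝ]} (hg : SliceRegular g) (I K : Sph) {x y : ℝ}
    (hxy : x ^ 2 + y ^ 2 < 1) :
    g (slicePt K.1 x y) = (2⁻¹:ℝ) • (1 - K.1 * I.1) * g (slicePt I.1 x y)
      + (2⁻¹:ℝ) • (1 + K.1 * I.1) * g (slicePt I.1 x (-y)) := by
  have hΨ : AnalyticOnNhd ℂ (psiFn g I K) (Metric.ball (0:ℂ) 1) :=
    (psi_diffOn I K hg).analyticOnNhd Metric.isOpen_ball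
  have hGK : AnalyticOnNhd ℂ (fun z : ℂ => SliceC.mk K (g (slicePt K.1 z.re z.im)))
      (Metric.ball (0:ℂ) 1) :=
    (diffOn_sliceFn hg K).analyticOnNhd Metric.isOpen_ball
  have hab : (2⁻¹:ℝ) • (1 - K.1 * I.1) + (2⁻¹:ℝ) • (1 + K.1 * I.1) = (1:ℍ[ℝ]) := by
    module
  have hreal : ∀ t : ℝ, psiFn g I K ((t:ℂ)) = SliceC.mk K (g (slicePt K.1 ((t:ℂ)).re ((t:ℂ)).im)) := by
    intro t
    show ((2⁻¹:ℝ) • (1 - K.1 * I.1) * g (slicePt I.1 ((t:ℂ)).re ((t:ℂ)).im)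
      + (2⁻¹:ℝ) • (1 + K.1 * I.1) * g (slicePt I.1 ((t:ℂ)).re (-((t:ℂ)).im)) : ℍ[ℝ])
      = g (slicePt K.1 ((t:ℂ)).re ((t:ℂ)).im)
    rw [Complex.ofReal_re, Complex.ofReal_im, neg_zero]
    rw [show slicePt I.1 t 0 = (t:ℍ[ℝ]) by simp [slicePt],
        show slicePt K.1 t 0 = (t:ℍ[ℝ]) by simp [slicePt]]
    rw [← add_mul, hab, one_mul]
  -- frequently equal near 0
  have hfreq : ∃ᶠ z in 𝓝[≠] (0:ℂ), psiFn g I K z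
      = (fun z : ℂ => SliceC.mk K (g (slicePt K.1 z.re z.im))) z := by
    have hseq : Filter.Tendsto (fun n : ℕ => ((1 / ((n:ℝ) + 1) : ℝ) : ℂ)) Filter.atTop
        (𝓝[≠] (0:ℂ)) := by
      apply tendsto_nhdsWithin_of_tendsto_nhds_of_eventually_within
      · have h0 : Filter.Tendsto (fun n : ℕ => (1 / ((n:ℝ) + 1) : ℝ)) Filter.atTop (𝓝 0) :=
          tendsto_one_div_add_atTop_nhds_zero_nat
        have h1 := (Complex.continuous_ofReal.tendsto 0).comp h0
        rw [show ((0:ℝ):ℂ) = (0:ℂ) by simp] at h1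
        exact h1
      · apply Filter.Eventually.of_forall
        intro n
        simp only [Set.mem_compl_iff, Set.mem_singleton_iff]
        exact Complex.ofReal_ne_zero.mpr (by positivity)
    exact hseq.frequently (Filter.Eventually.of_forall (fun n => hreal _)).frequently
  have heq := hΨ.eqOn_of_preconnected_of_frequently_eq hGK
    (convex_ball (0:ℂ) 1).isPreconnected (Metric.mem_ball_self one_pos) hfreq
  have hz : (⟨x, y⟩ : ℂ) ∈ Metric.ball (0:ℂ) 1 := mem_ball_c_iff.mpr hxy
  have := heq hz
  exact (congrArg SliceC.q this).symm

lemma rep_bound {g : ℍ[ℝ] → ℍ[ℝ]} (hg : SliceRegular g) (I K : Sph) {x y : ℝ}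
    (hxy : x ^ 2 + y ^ 2 < 1) :
    ‖g (slicePt K.1 x y)‖ ≤ ‖g (slicePt I.1 x y)‖ + ‖g (slicePt I.1 x (-y))‖ := by
  rw [rep_formula hg I K hxy]
  have hna : ‖(2⁻¹:ℝ) • (1 - K.1 * I.1)‖ ≤ 1 := by
    rw [norm_smul]
    have h1 : ‖(1:ℍ[ℝ]) - K.1 * I.1‖ ≤ 2 := by
      calc ‖(1:ℍ[ℝ]) - K.1 * I.1‖ ≤ ‖(1:ℍ[ℝ])‖ + ‖K.1 * I.1‖ := norm_sub_le _ _
        _ = 2 := by rw [norm_one, norm_mul, norm_one_of_sq K.2, norm_one_of_sq I.2]; norm_num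
    have h2 : ‖(2⁻¹:ℝ)‖ = 2⁻¹ := by rw [Real.norm_eq_abs, abs_of_pos]; norm_num
    rw [h2]; linarith
  have hnb : ‖(2⁻¹:ℝ) • (1 + K.1 * I.1)‖ ≤ 1 := by
    rw [norm_smul]
    have h1 : ‖(1:ℍ[ℝ]) + K.1 * I.1‖ ≤ 2 := by
      calc ‖(1:ℍ[ℝ]) + K.1 * I.1‖ ≤ ‖(1:ℍ[ℝ])‖ + ‖K.1 * I.1‖ := norm_add_le _ _
        _ = 2 := by rw [norm_one, norm_mul, norm_one_of_sq K.2, norm_one_of_sq I.2]; norm_num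
    have h2 : ‖(2⁻¹:ℝ)‖ = 2⁻¹ := by rw [Real.norm_eq_abs, abs_of_pos]; norm_num
    rw [h2]; linarith
  calc ‖(2⁻¹:ℝ) • (1 - K.1 * I.1) * g (slicePt I.1 x y)
        + (2⁻¹:ℝ) • (1 + K.1 * I.1) * g (slicePt I.1 x (-y))‖
      ≤ ‖(2⁻¹:ℝ) • (1 - K.1 * I.1) * g (slicePt I.1 x y)‖
        + ‖(2⁻¹:ℝ) • (1 + K.1 * I.1) * g (slicePt I.1 x (-y))‖ := norm_add_le _ _
    _ ≤ 1 * ‖g (slicePt I.1 x y)‖ + 1 * ‖g (slicePt I.1 x (-y))‖ := by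
        rw [norm_mul, norm_mul]
        gcongr
    _ = ‖g (slicePt I.1 x y)‖ + ‖g (slicePt I.1 x (-y))‖ := by ring

lemma conj_slicePt {I u : ℍ[ℝ]} (hu : u ≠ 0) (x y : ℝ) :
    u⁻¹ * slicePt I x y * u = slicePt (u⁻¹ * I * u) x y := by
  have h1 : u⁻¹ * (x:ℍ[ℝ]) * u = (x:ℍ[ℝ]) := by
    rw [Quaternion.mul_coe_eq_smul, smul_mul_assoc, inv_mul_cancel₀ hu, qcoe_eq_smul_one]
  have h2 : u⁻¹ * (y • I) * u = y • (u⁻¹ * I * u) := by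
    rw [mul_smul_comm, smul_mul_assoc]
  simp only [slicePt, mul_add, add_mul]
  rw [h1, h2]

lemma sq_conj {I u : ℍ[ℝ]} (hu : u ≠ 0) (hI : I ^ 2 = -1) : (u⁻¹ * I * u) ^ 2 = -1 := by
  have hII : I * I = -1 := by rw [← pow_two, hI]
  rw [pow_two]
  calc u⁻¹ * I * u * (u⁻¹ * I * u) = u⁻¹ * (I * (u * u⁻¹) * I) * u := by
        simp only [mul_assoc]
    _ = u⁻¹ * (I * I) * u := by rw [mul_inv_cancel₀ hu, mul_one]
    _ = -(u⁻¹ * u) := by rw [hII]; simp [mul_assoc]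
    _ = -1 := by rw [inv_mul_cancel₀ hu]

lemma circle_disc {r : ℝ} (hr0 : 0 ≤ r) (hr1 : r < 1) (θ : ℝ) :
    (r * Real.cos θ) ^ 2 + (r * Real.sin θ) ^ 2 < 1 := by
  have key : (r * Real.cos θ) ^ 2 + (r * Real.sin θ) ^ 2 = r ^ 2 := by
    linear_combination (r ^ 2) * (Real.sin_sq_add_cos_sq θ)
  rw [key]
  nlinarith

lemma circlePt_mem_ball {I : ℍ[ℝ]} (hI : I ^ 2 = -1) {r : ℝ} (hr0 : 0 ≤ r) (hr1 : r < 1)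
    (θ : ℝ) : circlePt I r θ ∈ QBall := by
  rw [QBall, Metric.mem_ball, dist_zero_right]
  have h1 := normSq_slicePt hI (r * Real.cos θ) (r * Real.sin θ)
  have h2 := circle_disc hr0 hr1 θ
  have h3 : ‖circlePt I r θ‖ ^ 2 < 1 := by rw [circlePt, h1]; exact h2
  nlinarith [norm_nonneg (circlePt I r θ)]

/-- The key pointwise bound for the regular product. -/
lemma starProd_pointwise {f g fg : ℍ[ℝ] → ℍ[ℝ]} (hg : SliceRegular g)
    (hfgdef : ∀ w ∈ QBall, fg w = starProd f g w) (I : Sph) {r : ℝ}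
    (hr0 : 0 ≤ r) (hr1 : r < 1) (θ : ℝ) :
    ‖fg (circlePt I.1 r θ)‖
      ≤ ‖f (circlePt I.1 r θ)‖ * (‖g (circlePt I.1 r θ)‖ + ‖g (circlePt I.1 r (-θ))‖) := by
  set q : ℍ[ℝ] := circlePt I.1 r θ with hq
  have hqb : q ∈ QBall := circlePt_mem_ball I.2 hr0 hr1 θ
  rw [hfgdef q hqb]
  by_cases h0 : f q = 0
  · rw [starProd, if_pos h0]
    simp only [norm_zero]
    positivity
  · rw [starProd, if_neg h0]
    set u := f q with hu
    have hconj : u⁻¹ * q * u = slicePt (u⁻¹ * I.1 * u) (r * Real.cos θ) (r * Real.sin θ) := by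
      rw [hq, circlePt, conj_slicePt h0]
    have hK : (u⁻¹ * I.1 * u) ^ 2 = -1 := sq_conj h0 I.2
    rw [norm_mul, hconj]
    apply mul_le_mul_of_nonneg_left _ (norm_nonneg u)
    have hb := rep_bound hg I ⟨u⁻¹ * I.1 * u, hK⟩ (circle_disc hr0 hr1 θ)
    simp only at hb
    have hcir : circlePt I.1 r (-θ) = slicePt I.1 (r * Real.cos θ) (-(r * Real.sin θ)) := by
      rw [circlePt, Real.cos_neg, Real.sin_neg]
      rw [show r * -Real.sin θ = -(r * Real.sin θ) by ring]
    rw [hcir]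
    exact hb

lemma continuous_circle {h : ℍ[ℝ] → ℍ[ℝ]} (hh : SliceRegular h) (I : Sph) {r : ℝ}
    (hr0 : 0 ≤ r) (hr1 : r < 1) :
    Continuous (fun θ : ℝ => h (circlePt I.1 r θ)) := by
  rw [continuous_iff_continuousAt]
  intro θ
  have hc : ContinuousAt (fun w : ℝ × ℝ => h (slicePt I.1 w.1 w.2))
      (r * Real.cos θ, r * Real.sin θ) :=
    (hh I.1 I.2 _ (circle_disc hr0 hr1 θ)).1.continuousAt
  have hm : ContinuousAt (fun θ : ℝ => ((r * Real.cos θ, r * Real.sin θ) : ℝ × ℝ)) θ := by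
    fun_prop
  have hcomp : ContinuousAt ((fun w : ℝ × ℝ => h (slicePt I.1 w.1 w.2))
      ∘ (fun θ : ℝ => ((r * Real.cos θ, r * Real.sin θ) : ℝ × ℝ))) θ :=
    ContinuousAt.comp hc hm
  exact hcomp

section MeasurePart

lemma twoPi_pos : 0 < 2 * Real.pi := by positivity

lemma isFinite_restrict :
    IsFiniteMeasure (volume.restrict (Set.Ioc (0:ℝ) (2 * Real.pi))) := by
  constructor
  rw [Measure.restrict_apply_univ, Real.volume_Ioc]
  exact ENNReal.ofReal_lt_top

lemma memLp_cont {φ : ℝ → ℝ} (hφ : Continuous φ) (e : ℝ≥0∞) :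
    MemLp φ e (volume.restrict (Set.Ioc (0:ℝ) (2 * Real.pi))) := by
  haveI := isFinite_restrict
  obtain ⟨C, hC⟩ := (isCompact_Icc (a := (0:ℝ)) (b := 2 * Real.pi)).exists_bound_of_continuousOn
    hφ.continuousOn
  exact MemLp.of_bound hφ.aestronglyMeasurable C
    (ae_restrict_of_forall_mem measurableSet_Ioc fun x hx => hC x (Set.Ioc_subset_Icc_self hx))

lemma circle_CS {φ ψ : ℝ → ℝ} (hφ : Continuous φ) (hψ : Continuous ψ)
    (hφ0 : ∀ x, 0 ≤ φ x) (hψ0 : ∀ x, 0 ≤ ψ x) :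
    ∫ θ in (0:ℝ)..(2 * Real.pi), φ θ * ψ θ
      ≤ (∫ θ in (0:ℝ)..(2 * Real.pi), φ θ ^ (2:ℝ)) ^ ((1:ℝ)/2)
        * (∫ θ in (0:ℝ)..(2 * Real.pi), ψ θ ^ (2:ℝ)) ^ ((1:ℝ)/2) := by
  have h2 : Real.HolderConjugate 2 2 := Real.holderConjugate_iff.mpr ⟨one_lt_two, by norm_num⟩
  rw [intervalIntegral.integral_of_le twoPi_pos.le, intervalIntegral.integral_of_le twoPi_pos.le,
    intervalIntegral.integral_of_le twoPi_pos.le]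
  have h := MeasureTheory.integral_mul_le_Lp_mul_Lq_of_nonneg h2
    (Filter.Eventually.of_forall hφ0) (Filter.Eventually.of_forall hψ0)
    (by simpa using memLp_cont hφ (ENNReal.ofReal 2))
    (by simpa using memLp_cont hψ (ENNReal.ofReal 2))
  simpa using h

open intervalIntegral in
lemma sq_integral_bound {φ : ℝ → ℝ} (hφ : Continuous φ) (hφ0 : ∀ x, 0 ≤ φ x)
    {P A : ℝ} (hP : 2 ≤ P) (hA : 0 ≤ A)
    (hMP : ((1 / (2 * Real.pi)) * ∫ θ in (0:ℝ)..(2 * Real.pi), φ θ ^ P) ^ (1/P) ≤ A) :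
    ∫ θ in (0:ℝ)..(2 * Real.pi), φ θ ^ (2:ℝ) ≤ (2 * Real.pi) * A ^ (2:ℝ) := by
  have hPpos : (0:ℝ) < P := lt_of_lt_of_le (by norm_num) hP
  have hint_nonneg : 0 ≤ ∫ θ in (0:ℝ)..(2 * Real.pi), φ θ ^ P :=
    intervalIntegral.integral_nonneg twoPi_pos.le (fun x _ => Real.rpow_nonneg (hφ0 x) P)
  have hbase : 0 ≤ (1 / (2 * Real.pi)) * ∫ θ in (0:ℝ)..(2 * Real.pi), φ θ ^ P := by positivity
  have hstar : ∫ θ in (0:ℝ)..(2 * Real.pi), φ θ ^ P ≤ (2 * Real.pi) * A ^ P := by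
    have h1 := Real.rpow_le_rpow (Real.rpow_nonneg hbase _) hMP hPpos.le
    rw [← Real.rpow_mul hbase, one_div_mul_cancel hPpos.ne', Real.rpow_one] at h1
    have h4 := mul_le_mul_of_nonneg_left h1 twoPi_pos.le
    have hXeq : (2 * Real.pi) * ((1 / (2 * Real.pi)) * ∫ θ in (0:ℝ)..(2 * Real.pi), φ θ ^ P)
        = ∫ θ in (0:ℝ)..(2 * Real.pi), φ θ ^ P := by
      field_simp
    rw [hXeq] at h4
    exact h4
  rcases eq_or_lt_of_le hP with hP2 | hP2
  · rw [← hP2] at hstar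
    exact hstar
  · set s : ℝ := P / 2 with hs
    have hs1 : 1 < s := by rw [hs]; linarith
    have hst : Real.HolderConjugate s (Real.conjExponent s) :=
      Real.HolderConjugate.conjExponent hs1
    set t : ℝ := Real.conjExponent s with ht
    have hspos : 0 < s := lt_trans one_pos hs1
    have htpos : 0 < t := hst.symm.pos
    have hφ2 : Continuous (fun θ : ℝ => φ θ ^ (2:ℝ)) :=
      Continuous.rpow_const hφ (fun x => Or.inr (by norm_num))
    have hφ20 : ∀ x, (0:ℝ) ≤ φ x ^ (2:ℝ) := fun x => Real.rpow_nonneg (hφ0 x) _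
    have hH := MeasureTheory.integral_mul_le_Lp_mul_Lq_of_nonneg hst
      (f := fun θ : ℝ => φ θ ^ (2:ℝ)) (g := fun _ : ℝ => (1:ℝ))
      (Filter.Eventually.of_forall hφ20) (Filter.Eventually.of_forall (fun _ => zero_le_one))
      (memLp_cont hφ2 _) (memLp_cont continuous_const _)
    have ieq : ∀ ψ : ℝ → ℝ, (∫ θ in (0:ℝ)..(2 * Real.pi), ψ θ)
        = ∫ θ in Set.Ioc (0:ℝ) (2 * Real.pi), ψ θ :=
      fun ψ => intervalIntegral.integral_of_le twoPi_pos.le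
    rw [← ieq, ← ieq, ← ieq] at hH
    simp only [mul_one, Real.one_rpow] at hH
    rw [integral_one] at hH
    have hcongr : ∫ θ in (0:ℝ)..(2 * Real.pi), (φ θ ^ (2:ℝ)) ^ s
        = ∫ θ in (0:ℝ)..(2 * Real.pi), φ θ ^ P := by
      apply intervalIntegral.integral_congr
      intro θ _
      show (φ θ ^ (2:ℝ)) ^ s = φ θ ^ P
      rw [← Real.rpow_mul (hφ0 θ)]
      congr 1
      rw [hs]; field_simp
    rw [hcongr] at hH
    have h2 : (∫ θ in (0:ℝ)..(2 * Real.pi), φ θ ^ P) ^ (1/s)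
        ≤ ((2 * Real.pi) * A ^ P) ^ (1/s) :=
      Real.rpow_le_rpow hint_nonneg hstar (by positivity)
    have hPs : P * (1/s) = 2 := by
      rw [hs]
      field_simp
    have hsum : 1/s + 1/t = 1 := by
      rw [one_div, one_div]
      simpa using hst.inv_add_inv_eq_inv
    have h3 : ((2 * Real.pi) * A ^ P) ^ (1/s) * (2 * Real.pi - 0) ^ (1/t)
        = (2 * Real.pi) * A ^ (2:ℝ) := by
      rw [sub_zero, Real.mul_rpow twoPi_pos.le (Real.rpow_nonneg hA _),
        ← Real.rpow_mul hA, hPs, mul_right_comm, ← Real.rpow_add twoPi_pos, hsum,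
        Real.rpow_one]
    calc ∫ θ in (0:ℝ)..(2 * Real.pi), φ θ ^ (2:ℝ)
        ≤ (∫ θ in (0:ℝ)..(2 * Real.pi), φ θ ^ P) ^ (1/s) * (2 * Real.pi - 0) ^ (1/t) := hH
      _ ≤ ((2 * Real.pi) * A ^ P) ^ (1/s) * (2 * Real.pi - 0) ^ (1/t) :=
          mul_le_mul_of_nonneg_right h2 (Real.rpow_nonneg (by rw [sub_zero]; positivity) _)
      _ = (2 * Real.pi) * A ^ (2:ℝ) := h3

end MeasurePart

open intervalIntegral in
lemma reflect_integral {ψ : ℝ → ℝ} (hper : Function.Periodic ψ (2 * Real.pi)) :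
    (∫ θ in (0:ℝ)..(2 * Real.pi), ψ (-θ)) = ∫ θ in (0:ℝ)..(2 * Real.pi), ψ θ := by
  rw [integral_comp_neg]
  have h := hper.intervalIntegral_add_eq (-(2 * Real.pi)) 0
  simpa using h

lemma circle_periodic (h : ℍ[ℝ] → ℍ[ℝ]) (I : ℍ[ℝ]) (r e : ℝ) :
    Function.Periodic (fun θ : ℝ => ‖h (circlePt I r θ)‖ ^ e) (2 * Real.pi) := by
  intro θ
  simp only [circlePt, Real.cos_add_two_pi, Real.sin_add_two_pi]

lemma two_int_bound {h : ℍ[ℝ] → ℍ[ℝ]} (hh : SliceRegular h) {p : ℝ≥0∞} (hp : 2 ≤ p)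
    (hN : hardyNorm h p < ⊤) (I : Sph) {r : ℝ} (hr0 : 0 ≤ r) (hr1 : r < 1) :
    ∫ θ in (0:ℝ)..(2 * Real.pi), ‖h (circlePt I.1 r θ)‖ ^ (2:ℝ)
      ≤ (2 * Real.pi) * (hardyNorm h p).toReal ^ (2:ℝ) := by
  set A := (hardyNorm h p).toReal with hA
  have hA0 : 0 ≤ A := ENNReal.toReal_nonneg
  by_cases hptop : p = ⊤
  · have hbd : ∀ θ : ℝ, ‖h (circlePt I.1 r θ)‖ ≤ A := by
      intro θ
      have h1 : ENNReal.ofReal ‖h (slicePt I.1 (r * Real.cos θ) (r * Real.sin θ))‖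
          ≤ sliceNormE h I.1 ⊤ := by
        rw [sliceNormE, if_pos rfl]
        exact le_iSup₂ (f := fun (w : ℝ × ℝ) (_ : w.1 ^ 2 + w.2 ^ 2 < 1) =>
          ENNReal.ofReal ‖h (slicePt I.1 w.1 w.2)‖)
          ((r * Real.cos θ, r * Real.sin θ) : ℝ × ℝ) (circle_disc hr0 hr1 θ)
      have h2 : sliceNormE h I.1 ⊤ ≤ hardyNorm h ⊤ :=
        le_iSup₂ (f := fun (J : ℍ[ℝ]) (_ : J ∈ QSphere) => sliceNormE h J ⊤) I.1 I.2
      have h3 := le_trans h1 h2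
      rw [← hptop] at h3
      rw [hA]
      exact (ENNReal.ofReal_le_iff_le_toReal hN.ne).mp h3
    have hmono : ∫ θ in (0:ℝ)..(2 * Real.pi), ‖h (circlePt I.1 r θ)‖ ^ (2:ℝ)
        ≤ ∫ _ in (0:ℝ)..(2 * Real.pi), A ^ (2:ℝ) := by
      apply intervalIntegral.integral_mono_on twoPi_pos.le
        (((continuous_circle hh I hr0 hr1).norm.rpow_const
          (fun x => Or.inr (by norm_num))).intervalIntegrable _ _)
        (intervalIntegrable_const)
      intro θ _
      exact Real.rpow_le_rpow (norm_nonneg _) (hbd θ) (by norm_num)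
    calc ∫ θ in (0:ℝ)..(2 * Real.pi), ‖h (circlePt I.1 r θ)‖ ^ (2:ℝ)
        ≤ ∫ _ in (0:ℝ)..(2 * Real.pi), A ^ (2:ℝ) := hmono
      _ = (2 * Real.pi) * A ^ (2:ℝ) := by
          rw [intervalIntegral.integral_const, smul_eq_mul, sub_zero]
  · set P := p.toReal with hP
    have hP2 : (2:ℝ) ≤ P := by
      have h0 := ENNReal.toReal_mono hptop hp
      simpa using h0
    have hchain : sliceMp h I.1 P r ≤ hardyNorm h p := by
      have l1 : sliceMp h I.1 P r ≤ sliceNorm h I.1 P :=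
        le_iSup₂ (f := fun (r' : ℝ) (_ : r' ∈ Set.Ico (0:ℝ) 1) => sliceMp h I.1 P r') r
          ⟨hr0, hr1⟩
      have l2 : sliceNorm h I.1 P = sliceNormE h I.1 p := by rw [sliceNormE, if_neg hptop]
      have l3 : sliceNormE h I.1 p ≤ hardyNorm h p :=
        le_iSup₂ (f := fun (J : ℍ[ℝ]) (_ : J ∈ QSphere) => sliceNormE h J p) I.1 I.2
      exact le_trans l1 (l2 ▸ l3)
    rw [sliceMp] at hchain
    have hMP := (ENNReal.ofReal_le_iff_le_toReal hN.ne).mp hchain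
    exact sq_integral_bound (continuous_circle hh I hr0 hr1).norm (fun θ => norm_nonneg _)
      hP2 hA0 hMP

lemma slice_bound {f g fg : ℍ[ℝ] → ℍ[ℝ]} {p : ℝ≥0∞} (hp : 2 ≤ p)
    (hfSR : SliceRegular f) (hfN : hardyNorm f p < ⊤)
    (hgSR : SliceRegular g) (hgN : hardyNorm g p < ⊤)
    (hfgSR : SliceRegular fg) (hfgdef : ∀ w ∈ QBall, fg w = starProd f g w)
    (I : Sph) {r : ℝ} (hr0 : 0 ≤ r) (hr1 : r < 1) :
    (1 / (2 * Real.pi)) * ∫ θ in (0:ℝ)..(2 * Real.pi), ‖fg (circlePt I.1 r θ)‖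
      ≤ 2 * (hardyNorm f p).toReal * (hardyNorm g p).toReal := by
  set A := (hardyNorm f p).toReal with hA
  set B := (hardyNorm g p).toReal with hB
  have hA0 : 0 ≤ A := ENNReal.toReal_nonneg
  have hB0 : 0 ≤ B := ENNReal.toReal_nonneg
  set φf : ℝ → ℝ := fun θ => ‖f (circlePt I.1 r θ)‖ with hφf
  set φg : ℝ → ℝ := fun θ => ‖g (circlePt I.1 r θ)‖ with hφg
  set φgn : ℝ → ℝ := fun θ => ‖g (circlePt I.1 r (-θ))‖ with hφgn
  have cf : Continuous φf := (continuous_circle hfSR I hr0 hr1).norm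
  have cg : Continuous φg := (continuous_circle hgSR I hr0 hr1).norm
  have cgn : Continuous φgn := cg.comp continuous_neg
  have cfg : Continuous fun θ : ℝ => ‖fg (circlePt I.1 r θ)‖ :=
    (continuous_circle hfgSR I hr0 hr1).norm
  have hf0 : ∀ x, 0 ≤ φf x := fun x => norm_nonneg _
  have hg0 : ∀ x, 0 ≤ φg x := fun x => norm_nonneg _
  have hgn0 : ∀ x, 0 ≤ φgn x := fun x => norm_nonneg _
  -- step 1 : pointwise bound
  have step1 : ∫ θ in (0:ℝ)..(2 * Real.pi), ‖fg (circlePt I.1 r θ)‖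
      ≤ ∫ θ in (0:ℝ)..(2 * Real.pi), (φf θ * φg θ + φf θ * φgn θ) := by
    apply intervalIntegral.integral_mono_on twoPi_pos.le
      (cfg.intervalIntegrable _ _)
      (((cf.mul cg).add (cf.mul cgn)).intervalIntegrable _ _)
    intro θ _
    have hpt := starProd_pointwise hgSR hfgdef I hr0 hr1 θ
    calc ‖fg (circlePt I.1 r θ)‖ ≤ φf θ * (φg θ + φgn θ) := hpt
      _ = φf θ * φg θ + φf θ * φgn θ := mul_add _ _ _
  have step2 : ∫ θ in (0:ℝ)..(2 * Real.pi), (φf θ * φg θ + φf θ * φgn θ)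
      = (∫ θ in (0:ℝ)..(2 * Real.pi), φf θ * φg θ)
        + ∫ θ in (0:ℝ)..(2 * Real.pi), φf θ * φgn θ :=
    intervalIntegral.integral_add ((cf.mul cg).intervalIntegrable _ _)
      ((cf.mul cgn).intervalIntegrable _ _)
  -- Cauchy-Schwarz
  have cs1 := circle_CS cf cg hf0 hg0
  have cs2 := circle_CS cf cgn hf0 hgn0
  -- reflection identity
  have hrefl : (∫ θ in (0:ℝ)..(2 * Real.pi), φgn θ ^ (2:ℝ))
      = ∫ θ in (0:ℝ)..(2 * Real.pi), φg θ ^ (2:ℝ) :=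
    reflect_integral (circle_periodic g I.1 r 2)
  rw [hrefl] at cs2
  -- second moment bounds
  have hf2 := two_int_bound hfSR hp hfN I hr0 hr1
  have hg2 := two_int_bound hgSR hp hgN I hr0 hr1
  have hIf0 : 0 ≤ ∫ θ in (0:ℝ)..(2 * Real.pi), φf θ ^ (2:ℝ) :=
    intervalIntegral.integral_nonneg twoPi_pos.le (fun x _ => Real.rpow_nonneg (hf0 x) _)
  have hIg0 : 0 ≤ ∫ θ in (0:ℝ)..(2 * Real.pi), φg θ ^ (2:ℝ) :=
    intervalIntegral.integral_nonneg twoPi_pos.le (fun x _ => Real.rpow_nonneg (hg0 x) _)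
  have hrootf : (∫ θ in (0:ℝ)..(2 * Real.pi), φf θ ^ (2:ℝ)) ^ ((1:ℝ)/2)
      ≤ (2 * Real.pi) ^ ((1:ℝ)/2) * A := by
    calc (∫ θ in (0:ℝ)..(2 * Real.pi), φf θ ^ (2:ℝ)) ^ ((1:ℝ)/2)
        ≤ ((2 * Real.pi) * A ^ (2:ℝ)) ^ ((1:ℝ)/2) :=
          Real.rpow_le_rpow hIf0 hf2 (by norm_num)
      _ = (2 * Real.pi) ^ ((1:ℝ)/2) * A := by
          rw [Real.mul_rpow twoPi_pos.le (Real.rpow_nonneg hA0 _), ← Real.rpow_mul hA0]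
          norm_num
  have hrootg : (∫ θ in (0:ℝ)..(2 * Real.pi), φg θ ^ (2:ℝ)) ^ ((1:ℝ)/2)
      ≤ (2 * Real.pi) ^ ((1:ℝ)/2) * B := by
    calc (∫ θ in (0:ℝ)..(2 * Real.pi), φg θ ^ (2:ℝ)) ^ ((1:ℝ)/2)
        ≤ ((2 * Real.pi) * B ^ (2:ℝ)) ^ ((1:ℝ)/2) :=
          Real.rpow_le_rpow hIg0 hg2 (by norm_num)
      _ = (2 * Real.pi) ^ ((1:ℝ)/2) * B := by
          rw [Real.mul_rpow twoPi_pos.le (Real.rpow_nonneg hB0 _), ← Real.rpow_mul hB0]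
          norm_num
  have hprod : (∫ θ in (0:ℝ)..(2 * Real.pi), φf θ ^ (2:ℝ)) ^ ((1:ℝ)/2)
      * (∫ θ in (0:ℝ)..(2 * Real.pi), φg θ ^ (2:ℝ)) ^ ((1:ℝ)/2)
      ≤ (2 * Real.pi) * (A * B) := by
    have := mul_le_mul hrootf hrootg (Real.rpow_nonneg hIg0 _)
      (by positivity)
    calc (∫ θ in (0:ℝ)..(2 * Real.pi), φf θ ^ (2:ℝ)) ^ ((1:ℝ)/2)
        * (∫ θ in (0:ℝ)..(2 * Real.pi), φg θ ^ (2:ℝ)) ^ ((1:ℝ)/2)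
        ≤ ((2 * Real.pi) ^ ((1:ℝ)/2) * A) * ((2 * Real.pi) ^ ((1:ℝ)/2) * B) := this
      _ = ((2 * Real.pi) ^ ((1:ℝ)/2) * (2 * Real.pi) ^ ((1:ℝ)/2)) * (A * B) := by ring
      _ = (2 * Real.pi) * (A * B) := by
          rw [← Real.rpow_add twoPi_pos]
          norm_num
  have htotal : ∫ θ in (0:ℝ)..(2 * Real.pi), ‖fg (circlePt I.1 r θ)‖
      ≤ 2 * ((2 * Real.pi) * (A * B)) := by
    calc ∫ θ in (0:ℝ)..(2 * Real.pi), ‖fg (circlePt I.1 r θ)‖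
        ≤ ∫ θ in (0:ℝ)..(2 * Real.pi), (φf θ * φg θ + φf θ * φgn θ) := step1
      _ = (∫ θ in (0:ℝ)..(2 * Real.pi), φf θ * φg θ)
          + ∫ θ in (0:ℝ)..(2 * Real.pi), φf θ * φgn θ := step2
      _ ≤ (∫ θ in (0:ℝ)..(2 * Real.pi), φf θ ^ (2:ℝ)) ^ ((1:ℝ)/2)
            * (∫ θ in (0:ℝ)..(2 * Real.pi), φg θ ^ (2:ℝ)) ^ ((1:ℝ)/2)
          + (∫ θ in (0:ℝ)..(2 * Real.pi), φf θ ^ (2:ℝ)) ^ ((1:ℝ)/2)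
            * (∫ θ in (0:ℝ)..(2 * Real.pi), φg θ ^ (2:ℝ)) ^ ((1:ℝ)/2) :=
          add_le_add cs1 cs2
      _ ≤ (2 * Real.pi) * (A * B) + (2 * Real.pi) * (A * B) := add_le_add hprod hprod
      _ = 2 * ((2 * Real.pi) * (A * B)) := by ring
  have hfinal := mul_le_mul_of_nonneg_left htotal
    (by positivity : (0:ℝ) ≤ 1 / (2 * Real.pi))
  calc (1 / (2 * Real.pi)) * ∫ θ in (0:ℝ)..(2 * Real.pi), ‖fg (circlePt I.1 r θ)‖
      ≤ (1 / (2 * Real.pi)) * (2 * ((2 * Real.pi) * (A * B))) := hfinal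
    _ = 2 * A * B := by field_simp

lemma hardy1_lt_top {f g fg : ℍ[ℝ] → ℍ[ℝ]} {p : ℝ≥0∞} (hp : 2 ≤ p)
    (hf : MemHp f p) (hg : MemHp g p) (hfgSR : SliceRegular fg)
    (hfgdef : ∀ w ∈ QBall, fg w = starProd f g w) :
    hardyNorm fg 1 < ⊤ := by
  set C := 2 * (hardyNorm f p).toReal * (hardyNorm g p).toReal with hC
  have hkey : hardyNorm fg 1 ≤ ENNReal.ofReal C := by
    rw [hardyNorm]
    apply iSup₂_le
    intro I hI
    rw [sliceNormE, if_neg (by norm_num : (1:ℝ≥0∞) ≠ ⊤), ENNReal.toReal_one, sliceNorm]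
    apply iSup₂_le
    intro r hr
    obtain ⟨hr0, hr1⟩ := hr
    rw [sliceMp]
    apply ENNReal.ofReal_le_ofReal
    simp only [Real.rpow_one, div_one]
    exact slice_bound hp hf.1 hf.2 hg.1 hg.2 hfgSR hfgdef ⟨I, hI⟩ hr0 hr1
  exact lt_of_le_of_lt hkey ENNReal.ofReal_lt_top


/-- If `p ∈ [2,∞]` and `f, g ∈ H^p(𝔹)`, then `f * g ∈ H^1(𝔹)` and `g * f ∈ H^1(𝔹)`. -/
theorem starProd_memH1_of_two_le (f g fg gf : ℍ[ℝ] → ℍ[ℝ]) (p : ℝ≥0∞) (hp : 2 ≤ p)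
    (hf : MemHp f p) (hg : MemHp g p)
    (hfg : SliceRegular fg) (hfgdef : ∀ w ∈ QBall, fg w = starProd f g w)
    (hgf : SliceRegular gf) (hgfdef : ∀ w ∈ QBall, gf w = starProd g f w) :
    hardyNorm fg 1 < ⊤ ∧ hardyNorm gf 1 < ⊤ :=
  ⟨hardy1_lt_top hp hf hg hfg hfgdef, hardy1_lt_top hp hg hf hgf hgfdef⟩
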